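/- The directed graph $H$ with vertex set $\mathbb{N}$ and exactly one edge from $n$ to $n+1$ for each $n\in\mathbb{N}$ (an infinite ray) is row-finite and has no sinks, but does not satisfy Condition (Y); consequently, for any unital ring $R$, the Leavitt path algebra $L_R(H)$ is not strongly $\mathbb{Z}$-graded. -/

import Mathlib

/-- A directed graph: vertices, edges, and source/range maps. -/
structure DirGraph where
  V : Type
  Ed : Type
  s : Ed → V
  r : Ed → V

namespace DirGraph

variable (E : DirGraph)

/-- A (finite) path is a list of composable edges. -/
def IsPath (l : List E.Ed) : Prop := l.Chain' (fun e f => E.r e = E.s f)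

/-- The list of edges `l` starts at the vertex `v` (vacuously true for the empty list). -/
def StartsAt (v : E.V) (l : List E.Ed) : Prop := ∀ e ∈ l.head?, E.s e = v

/-- The end vertex of a path `l` which starts at `v`. -/
def endV (v : E.V) (l : List E.Ed) : E.V := l.getLast?.elim v E.r

/-- A nonempty list of edges `l` ends at the vertex `w`. -/
def EndsAt (l : List E.Ed) (w : E.V) : Prop := ∃ e, l.getLast? = some e ∧ E.r e = w

/-- An infinite path is a sequence of composable edges. -/
def IsInfPath (p : ℕ → E.Ed) : Prop := ∀ n, E.r (p n) = E.s (p (n + 1))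

/-- `E` is row-finite: every vertex emits only finitely many edges. -/
def RowFinite : Prop := ∀ v : E.V, {e : E.Ed | E.s e = v}.Finite

/-- `E` has no sinks: every vertex emits at least one edge. -/
def NoSinks : Prop := ∀ v : E.V, ∃ e : E.Ed, E.s e = v

/-- Condition (Y): for every `k ≥ 1` and every infinite path `p`, some (nonempty) initial
subpath of `p` (of length `n`, ending at the vertex `E.s (p n)`) admits a finite path `β`
with the same range and with length exceeding `n` by exactly `k`. -/
def CondY : Prop := ∀ k : ℕ, 1 ≤ k → ∀ p : ℕ → E.Ed, E.IsInfPath p →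
  ∃ n : ℕ, 1 ≤ n ∧ ∃ β : List E.Ed, E.IsPath β ∧ β.length = n + k ∧ E.EndsAt β (E.s (p n))

/-- Condition (Y1): Condition (Y) restricted to `k = 1`. -/
def CondY1 : Prop := ∀ p : ℕ → E.Ed, E.IsInfPath p →
  ∃ n : ℕ, 1 ≤ n ∧ ∃ β : List E.Ed, E.IsPath β ∧ β.length = n + 1 ∧ E.EndsAt β (E.s (p n))

/-- `r(α)` is a turning node for the path `α` (starting at `v`): there is a path of length
`|α| + 1` with the same range as `α`. -/
def Turning (v : E.V) (α : List E.Ed) : Prop :=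
  ∃ β : List E.Ed, E.IsPath β ∧ β.length = α.length + 1 ∧ E.EndsAt β (E.endV v α)

/-- The set `Xₙ(v)`: paths of length `n` starting at `v`, all of whose nonempty initial
subpaths end at non-turning nodes. -/
def Xset (n : ℕ) (v : E.V) : Set (List E.Ed) :=
  {l | E.IsPath l ∧ E.StartsAt v l ∧ l.length = n ∧
    ∀ i : ℕ, 1 ≤ i → i ≤ n → ¬ E.Turning v (l.take i)}

end DirGraph
namespace LPA

/-- Generators of the Leavitt path algebra: vertices, real edges, and ghost edges. -/
inductive LGen (E : DirGraph) : Type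
  | vert : E.V → LGen E
  | edge : E.Ed → LGen E
  | ghost : E.Ed → LGen E

/-- Degree of a generator: `0` for vertices, `1` for real edges, `-1` for ghost edges. -/
def gdeg {E : DirGraph} : LGen E → ℤ
  | .vert _ => 0
  | .edge _ => 1
  | .ghost _ => -1

/-- Degree of a word in the generators. -/
def wdeg {E : DirGraph} (w : FreeSemigroup (LGen E)) : ℤ :=
  Multiplicative.toAdd
    (FreeSemigroup.lift (fun x : LGen E => Multiplicative.ofAdd (gdeg x)) w)

variable (R : Type) [Ring R] (E : DirGraph)

/-- The free (non-unital) `R`-ring on the generators, with `R` commuting with the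
generators: the semigroup algebra of the free semigroup on the generators. -/
abbrev FreeLPA : Type := MonoidAlgebra R (FreeSemigroup (LGen E))

/-- A generator, as an element of the free ring. -/
noncomputable def fgen (x : LGen E) : FreeLPA R E :=
  MonoidAlgebra.single (FreeSemigroup.of x) 1

open scoped Classical in
/-- The defining relations (1)–(4) of the Leavitt path algebra. -/
inductive LRel : FreeLPA R E → FreeLPA R E → Prop
  | vert_mul (u v : E.V) :
      LRel (fgen R E (.vert u) * fgen R E (.vert v))
        (if u = v then fgen R E (.vert v) else 0)
  | src_edge (f : E.Ed) :
      LRel (fgen R E (.vert (E.s f)) * fgen R E (.edge f)) (fgen R E (.edge f))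
  | edge_rng (f : E.Ed) :
      LRel (fgen R E (.edge f) * fgen R E (.vert (E.r f))) (fgen R E (.edge f))
  | rng_ghost (f : E.Ed) :
      LRel (fgen R E (.vert (E.r f)) * fgen R E (.ghost f)) (fgen R E (.ghost f))
  | ghost_src (f : E.Ed) :
      LRel (fgen R E (.ghost f) * fgen R E (.vert (E.s f))) (fgen R E (.ghost f))
  | ghost_edge (f f' : E.Ed) :
      LRel (fgen R E (.ghost f) * fgen R E (.edge f'))
        (if f = f' then fgen R E (.vert (E.r f)) else 0)
  | ck (v : E.V) (A : Finset E.Ed) (hA : A.Nonempty) (hAv : ∀ f, f ∈ A ↔ E.s f = v) :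
      LRel (∑ f ∈ A, fgen R E (.edge f) * fgen R E (.ghost f)) (fgen R E (.vert v))

/-- The ring congruence generated by the Leavitt path algebra relations. -/
noncomputable def lcon : RingCon (FreeLPA R E) := ringConGen (LRel R E)

/-- The Leavitt path algebra `L_R(E)`, as a non-unital ring. -/
noncomputable def Leavitt : Type := (lcon R E).Quotient

noncomputable instance : NonUnitalRing (Leavitt R E) :=
  inferInstanceAs (NonUnitalRing (lcon R E).Quotient)

/-- The quotient map from the free ring onto the Leavitt path algebra. -/
noncomputable def lmk (x : FreeLPA R E) : Leavitt R E := (x : (lcon R E).Quotient)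

/-- A generator, as an element of the Leavitt path algebra. -/
noncomputable def gen (x : LGen E) : Leavitt R E := lmk R E (fgen R E x)

/-- The homogeneous component of degree `n` of the canonical `ℤ`-gradation of `L_R(E)`:
the additive subgroup generated by (the images of) all monomials `c·w` with `w` a word
of degree `n` in the generators. -/
noncomputable def LS (n : ℤ) : AddSubgroup (Leavitt R E) :=
  AddSubgroup.closure
    {x | ∃ (w : FreeSemigroup (LGen E)) (c : R),
      wdeg w = n ∧ x = lmk R E (MonoidAlgebra.single w c)}

/-- The product of two additive subgroups of a (possibly non-unital) ring: the additive
subgroup generated by products. -/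
def subMul {S : Type} [NonUnitalRing S] (A B : AddSubgroup S) : AddSubgroup S :=
  AddSubgroup.closure {x | ∃ a ∈ A, ∃ b ∈ B, x = a * b}

/-- `L_R(E)` is strongly `ℤ`-graded: `S_n S_m = S_{n+m}` for all `n, m ∈ ℤ`. -/
noncomputable def StronglyGraded : Prop :=
  ∀ n m : ℤ, subMul (LS R E n) (LS R E m) = LS R E (n + m)

/-- The element `v·f₁⋯fₙ` of `L_R(E)` associated to a path `α = f₁⋯fₙ` starting at `v`. -/
noncomputable def mkPath (v : E.V) (α : List E.Ed) : Leavitt R E :=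
  (α.map fun e => gen R E (.edge e)).foldl (· * ·) (gen R E (.vert v))

/-- The element `fₙ*⋯f₁*·v` of `L_R(E)` associated to the ghost path `α* = fₙ*⋯f₁*`
of a path `α = f₁⋯fₙ` starting at `v`. -/
noncomputable def mkPathStar (v : E.V) (α : List E.Ed) : Leavitt R E :=
  ((α.map fun e => gen R E (.ghost e)).reverse).foldr (· * ·) (gen R E (.vert v))

end LPA

/-- The infinite ray: vertex set `ℕ`, with exactly one edge from `n` to `n + 1` for each
`n`. -/
def rayGraph : DirGraph where
  V := ℕ
  Ed := ℕ
  s := id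
  r := Nat.succ


namespace RayProof

open LPA

/-! ### Failure of Condition (Y) for the ray -/

lemma ray_path_head_last : ∀ β : List ℕ, β.Chain' (fun e f => e + 1 = f) →
    ∀ x y : ℕ, β.head? = some x → β.getLast? = some y → x + β.length = y + 1 := by
  intro β
  induction β with
  | nil => intro _ x y hx; simp at hx
  | cons a t ih =>
    intro hp x y hx hy
    cases t with
    | nil =>
      simp only [List.head?, Option.some.injEq] at hx
      simp only [List.getLast?, Option.some.injEq] at hy
      subst hx; subst hy; simp
    | cons b t' =>
      rw [List.Chain', List.isChain_cons_cons] at hp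
      obtain ⟨hab, htail⟩ := hp
      simp only [List.head?, Option.some.injEq] at hx
      subst hx
      rw [List.getLast?_cons_cons] at hy
      have := ih htail b y rfl hy
      simp only [List.length_cons] at this ⊢
      omega

lemma ray_no_long (n : ℕ) (β : List ℕ) (hβ : β.Chain' (fun e f => e + 1 = f))
    (hlen : β.length = n + 1) : ¬ ∃ e' : ℕ, β.getLast? = some e' ∧ e' + 1 = n := by
  rintro ⟨e', hlast, hre⟩
  have hne : β ≠ [] := by
    intro h0; rw [h0] at hlast; simp at hlast
  have hxy := ray_path_head_last β hβ (β.head hne) e' (List.head?_eq_head hne) hlast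
  omega

lemma ray_not_condY : ¬ rayGraph.CondY := by
  intro h
  obtain ⟨n, hn, β, hβ, hlen, hend⟩ := h 1 le_rfl (fun n => n) (fun n => rfl)
  exact ray_no_long n β hβ hlen hend

/-! ### A matrix representation of the Leavitt path algebra of the ray -/

variable (R : Type) [Ring R]

abbrev MM : Type := ℕ →₀ R

/-- The matrix unit `E_{i,j}` as an `R`-linear endomorphism of `ℕ →₀ R`. -/
noncomputable def EE (i j : ℕ) : Module.End R (MM R) :=
  (Finsupp.lsingle i).comp (Finsupp.lapply j)

lemma EE_apply (i j : ℕ) (m : MM R) : EE R i j m = Finsupp.single i (m j) := rfl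

lemma EE_mul (i j k l : ℕ) :
    EE R i j * EE R k l = if j = k then EE R i l else 0 := by
  apply LinearMap.ext
  intro m
  have h1 : (EE R i j * EE R k l) m = Finsupp.single i ((Finsupp.single k (m l)) j) := rfl
  rw [h1, Finsupp.single_apply]
  by_cases h : j = k
  · subst h; simp [EE_apply]
  · simp [h, Ne.symm h, EE_apply]

/-- Image of each generator. -/
noncomputable def genEnd : LGen rayGraph → Module.End R (MM R)
  | .vert n => EE R n n
  | .edge n => EE R n (Nat.succ n)
  | .ghost n => EE R (Nat.succ n) n

/-- Extension to words. -/
noncomputable def uW : FreeSemigroup (LGen rayGraph) →ₙ* Module.End R (MM R) :=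
  FreeSemigroup.lift (genEnd R)

noncomputable def uE (w : FreeSemigroup (LGen rayGraph)) : AddMonoid.End (MM R) :=
  ((uW R) w).toAddMonoidHom

lemma uE_mul (w w' : FreeSemigroup (LGen rayGraph)) :
    uE R (w * w') = uE R w * uE R w' := by
  unfold uE; rw [map_mul]; rfl

lemma uE_of (x : LGen rayGraph) : uE R (FreeSemigroup.of x) = (genEnd R x).toAddMonoidHom := by
  unfold uE uW
  rw [FreeSemigroup.lift_of]

lemma uE_smul (w : FreeSemigroup (LGen rayGraph)) (c : R) (m : MM R) :
    uE R w (c • m) = c • uE R w m := map_smul (uW R w) c m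

/-- The monomial map. -/
noncomputable def mon (w : FreeSemigroup (LGen rayGraph)) : R →+ AddMonoid.End (MM R) where
  toFun c := ((smulAddHom R (MM R)) c).comp (uE R w)
  map_zero' := by
    refine AddMonoidHom.ext fun m => ?_
    simp
    rfl
  map_add' c c' := by
    refine AddMonoidHom.ext fun m => ?_
    show (c + c') • uE R w m = c • uE R w m + c' • uE R w m
    rw [add_smul]

lemma mon_apply (w : FreeSemigroup (LGen rayGraph)) (c : R) (m : MM R) :
    mon R w c m = c • uE R w m := rfl

lemma mon_mul (a a' : FreeSemigroup (LGen rayGraph)) (b b' : R) :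
    mon R (a * a') (b * b') = mon R a b * mon R a' b' := by
  refine AddMonoidHom.ext fun m => ?_
  show (b * b') • uE R (a * a') m = mon R a b (mon R a' b' m)
  rw [uE_mul]
  show (b * b') • (uE R a (uE R a' m)) = b • uE R a (b' • uE R a' m)
  rw [uE_smul, mul_smul]

/-- The representation of the free algebra. -/
noncomputable def Phi : FreeLPA R rayGraph →+ AddMonoid.End (MM R) :=
  (Finsupp.liftAddHom (mon R)).comp (MonoidAlgebra.coeffAddEquiv (R := R)).toAddMonoidHom

lemma Phi_single (w : FreeSemigroup (LGen rayGraph)) (c : R) :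
    Phi R (MonoidAlgebra.single w c) = mon R w c :=
  Finsupp.liftAddHom_apply_single _ _ _

lemma Phi_apply (f : FreeLPA R rayGraph) :
    Phi R f = f.coeff.sum fun w c => mon R w c :=
  Finsupp.liftAddHom_apply _ _

lemma Phi_mul (f g : FreeLPA R rayGraph) : Phi R (f * g) = Phi R f * Phi R g := by
  rw [MonoidAlgebra.mul_def, map_finsuppSum, Phi_apply R f, Finsupp.sum_mul]
  apply Finsupp.sum_congr
  intro a _
  rw [map_finsuppSum, Phi_apply R g, Finsupp.mul_sum]
  apply Finsupp.sum_congr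
  intro a' _
  rw [Phi_single, mon_mul]

noncomputable def gE (x : LGen rayGraph) : AddMonoid.End (MM R) :=
  (genEnd R x).toAddMonoidHom

lemma Phi_fgen (x : LGen rayGraph) : Phi R (fgen R rayGraph x) = gE R x := by
  rw [fgen, Phi_single]
  refine AddMonoidHom.ext fun m => ?_
  show (1:R) • uE R (FreeSemigroup.of x) m = gE R x m
  rw [one_smul, uE_of]
  rfl

noncomputable def EEa (i j : ℕ) : AddMonoid.End (MM R) := (EE R i j).toAddMonoidHom

lemma EEa_mul (i j k l : ℕ) :
    EEa R i j * EEa R k l = if j = k then EEa R i l else 0 := by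
  have h1 : EEa R i j * EEa R k l = (EE R i j * EE R k l).toAddMonoidHom := rfl
  rw [h1, EE_mul]
  by_cases h : j = k
  · rw [if_pos h, if_pos h]; rfl
  · rw [if_neg h, if_neg h]; rfl

lemma gE_vert (n : ℕ) : gE R (.vert n) = EEa R n n := rfl
lemma gE_edge (n : ℕ) : gE R (.edge n) = EEa R n (Nat.succ n) := rfl
lemma gE_ghost (n : ℕ) : gE R (.ghost n) = EEa R (Nat.succ n) n := rfl

lemma Phi_rel : ∀ x y, LRel R rayGraph x y → Phi R x = Phi R y := by
  intro x y h
  cases h with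
  | vert_mul u v =>
    rw [Phi_mul]; simp only [Phi_fgen]
    by_cases h : u = v
    · subst h
      rw [if_pos rfl]
      simp only [Phi_fgen]
      erw [gE_vert, EEa_mul, if_pos rfl]
    · erw [if_neg h, map_zero, gE_vert, gE_vert, EEa_mul, if_neg h]
  | src_edge f =>
    rw [Phi_mul]; simp only [Phi_fgen]
    show gE R (.vert f) * gE R (.edge f) = gE R (.edge f)
    erw [gE_vert, gE_edge, EEa_mul, if_pos rfl]
  | edge_rng f =>
    rw [Phi_mul]; simp only [Phi_fgen]
    show gE R (.edge f) * gE R (.vert (Nat.succ f)) = gE R (.edge f)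
    erw [gE_vert, gE_edge, EEa_mul, if_pos rfl]
  | rng_ghost f =>
    rw [Phi_mul]; simp only [Phi_fgen]
    show gE R (.vert (Nat.succ f)) * gE R (.ghost f) = gE R (.ghost f)
    erw [gE_vert, gE_ghost, EEa_mul, if_pos rfl]
  | ghost_src f =>
    rw [Phi_mul]; simp only [Phi_fgen]
    show gE R (.ghost f) * gE R (.vert f) = gE R (.ghost f)
    erw [gE_vert, gE_ghost, EEa_mul, if_pos rfl]
  | ghost_edge f f' =>
    rw [Phi_mul]; simp only [Phi_fgen]
    by_cases h : f = f'
    · subst h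
      rw [if_pos rfl]
      simp only [Phi_fgen]
      show gE R (.ghost f) * gE R (.edge f) = gE R (.vert (Nat.succ f))
      erw [gE_vert, gE_ghost, gE_edge, EEa_mul, if_pos rfl]
    · erw [if_neg h, map_zero, gE_ghost, gE_edge, EEa_mul, if_neg h]
  | ck v A hA hAv =>
    have hAeq : A = {v} := by
      ext f
      erw [hAv f, Finset.mem_singleton]
      exact Iff.rfl
    subst hAeq
    erw [Finset.sum_singleton, Phi_mul, Phi_fgen, Phi_fgen, Phi_fgen]
    show gE R (.edge v) * gE R (.ghost v) = gE R (.vert v)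
    erw [gE_vert, gE_ghost, gE_edge, EEa_mul, if_pos rfl]

lemma lcon_le : lcon R rayGraph ≤
    ({ r := fun x y => Phi R x = Phi R y
       iseqv := ⟨fun _ => rfl, Eq.symm, Eq.trans⟩
       mul' := fun h1 h2 => by
         change Phi R _ = Phi R _ at h1 h2 ⊢
         rw [Phi_mul, Phi_mul, h1, h2]
       add' := fun h1 h2 => by
         change Phi R _ = Phi R _ at h1 h2 ⊢
         rw [map_add, map_add, h1, h2] } : RingCon (FreeLPA R rayGraph)) :=
  RingCon.ringConGen_le.2 (Phi_rel R)

/-- The representation of the Leavitt path algebra. -/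
noncomputable def Psi : Leavitt R rayGraph → AddMonoid.End (MM R) :=
  Quotient.lift (⇑(Phi R)) (fun _ _ h => lcon_le R h)

lemma Psi_lmk (x : FreeLPA R rayGraph) : Psi R (lmk R rayGraph x) = Phi R x := rfl

lemma Psi_add (x y : Leavitt R rayGraph) : Psi R (x + y) = Psi R x + Psi R y := by
  induction x using Quotient.inductionOn with | h a =>
  induction y using Quotient.inductionOn with | h b =>
  show Psi R (lmk R rayGraph a + lmk R rayGraph b) = _
  rw [show lmk R rayGraph a + lmk R rayGraph b = lmk R rayGraph (a + b) from
    ((lcon R rayGraph).coe_add a b).symm, Psi_lmk, map_add]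
  rfl

lemma Psi_mul (x y : Leavitt R rayGraph) : Psi R (x * y) = Psi R x * Psi R y := by
  induction x using Quotient.inductionOn with | h a =>
  induction y using Quotient.inductionOn with | h b =>
  show Psi R (lmk R rayGraph a * lmk R rayGraph b) = _
  rw [show lmk R rayGraph a * lmk R rayGraph b = lmk R rayGraph (a * b) from
    ((lcon R rayGraph).coe_mul a b).symm, Psi_lmk, Phi_mul]
  rfl

noncomputable def PsiHom : Leavitt R rayGraph →+ AddMonoid.End (MM R) :=
  AddMonoidHom.mk' (Psi R) (Psi_add R)

/-! ### The degree filtration on endomorphisms -/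

/-- Endomorphisms of "degree `d`": column `j` only hits row `j - d`. -/
def Deg (d : ℤ) : AddSubgroup (AddMonoid.End (MM R)) where
  carrier := {f | ∀ (m : MM R) (i : ℕ),
    (∀ j ∈ m.support, (i : ℤ) + d ≠ (j : ℤ)) → f m i = 0}
  zero_mem' := by
    intro m i _
    show (0 : MM R) i = 0
    simp
  add_mem' := by
    intro f g hf hg m i h
    show (f m + g m) i = 0
    rw [Finsupp.add_apply, hf m i h, hg m i h, add_zero]
  neg_mem' := by
    intro f hf m i h
    show (-(f m)) i = 0
    rw [Finsupp.neg_apply, hf m i h, neg_zero]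

lemma Deg_mul {d d' : ℤ} {f g : AddMonoid.End (MM R)}
    (hf : f ∈ Deg R d) (hg : g ∈ Deg R d') : f * g ∈ Deg R (d + d') := by
  intro m i h
  show f (g m) i = 0
  apply hf
  intro j hj heq
  rw [Finsupp.mem_support_iff] at hj
  apply hj
  apply hg
  intro j' hj' heq'
  exact h j' hj' (by omega)

lemma EEa_deg (i j : ℕ) (d : ℤ) (hd : (i : ℤ) + d = (j : ℤ)) : EEa R i j ∈ Deg R d := by
  intro m k h
  show (Finsupp.single i (m j) : MM R) k = 0
  rw [Finsupp.single_apply]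
  split
  · next hik =>
    by_cases hm : m j = 0
    · exact hm
    · exact absurd (by subst hik; exact hd) (h j (Finsupp.mem_support_iff.mpr hm))
  · rfl

lemma gE_deg (x : LGen rayGraph) : gE R x ∈ Deg R (gdeg x) := by
  cases x with
  | vert n =>
    erw [gE_vert]
    exact EEa_deg R n n 0 (by simp [gdeg])
  | edge n =>
    erw [gE_edge]
    refine EEa_deg R n (Nat.succ n) 1 ?_
    show (Nat.cast n : ℤ) + 1 = (Nat.cast (Nat.succ n) : ℤ)
    erw [Nat.cast_succ]
  | ghost n =>
    erw [gE_ghost]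
    refine EEa_deg R (Nat.succ n) n (-1) ?_
    show (Nat.cast (Nat.succ n) : ℤ) + (-1) = (Nat.cast n : ℤ)
    erw [Nat.cast_succ]
    ring

lemma wdeg_of (x : LGen rayGraph) : wdeg (FreeSemigroup.of x) = gdeg x := by
  unfold wdeg
  rw [FreeSemigroup.lift_of]
  rfl

lemma wdeg_mul (w w' : FreeSemigroup (LGen rayGraph)) :
    wdeg (w * w') = wdeg w + wdeg w' := by
  unfold wdeg
  rw [map_mul]
  rfl

lemma uE_deg (w : FreeSemigroup (LGen rayGraph)) : uE R w ∈ Deg R (wdeg w) := by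
  induction w using FreeSemigroup.recOnMul with
  | ih1 x =>
    rw [wdeg_of, uE_of]
    exact gE_deg R x
  | ih2 x y hx hy =>
    rw [wdeg_mul, uE_mul]
    exact Deg_mul R hx hy

lemma mon_deg (w : FreeSemigroup (LGen rayGraph)) (c : R) :
    mon R w c ∈ Deg R (wdeg w) := by
  intro m i h
  rw [mon_apply, Finsupp.smul_apply, uE_deg R w m i h, smul_zero]

lemma LS_deg (d : ℤ) (x : Leavitt R rayGraph) (hx : x ∈ LS R rayGraph d) :
    PsiHom R x ∈ Deg R d := by
  have key : LS R rayGraph d ≤ (Deg R d).comap (PsiHom R) := by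
    refine (AddSubgroup.closure_le _).mpr ?_
    rintro z ⟨w, c, hw, rfl⟩
    show PsiHom R (lmk R rayGraph (MonoidAlgebra.single w c)) ∈ Deg R d
    have h1 : PsiHom R (lmk R rayGraph (MonoidAlgebra.single w c)) = mon R w c := by
      show Psi R (lmk R rayGraph _) = _
      rw [Psi_lmk, Phi_single]
    rw [h1, ← hw]
    exact mon_deg R w c
  exact key hx

/-- The `(0,0)` matrix entry, as an additive map to `R`. -/
noncomputable def ent : Leavitt R rayGraph →+ R :=
  AddMonoidHom.mk' (fun x => (PsiHom R x) (Finsupp.single 0 1) 0)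
    (by
      intro a b
      show (PsiHom R (a + b)) (Finsupp.single 0 1) 0 =
        (PsiHom R a) (Finsupp.single 0 1) 0 + (PsiHom R b) (Finsupp.single 0 1) 0
      rw [map_add]
      rfl)

lemma ent_vanish : subMul (LS R rayGraph (-1)) (LS R rayGraph 1) ≤ (ent R).ker := by
  refine (AddSubgroup.closure_le _).mpr ?_
  rintro z ⟨a, ha, b, hb, rfl⟩
  have hda := LS_deg R (-1) a ha
  have hdb := LS_deg R 1 b hb
  show (PsiHom R (a * b)) (Finsupp.single 0 1) 0 = 0
  have hmul : PsiHom R (a * b) = PsiHom R a * PsiHom R b := Psi_mul R a b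
  rw [hmul]
  show PsiHom R a (PsiHom R b (Finsupp.single 0 1)) 0 = 0
  have hb0 : PsiHom R b (Finsupp.single 0 1) = 0 := by
    ext i
    rw [Finsupp.coe_zero, Pi.zero_apply]
    apply hdb
    intro j hj
    have hj0 := Finsupp.support_single_subset hj
    rw [Finset.mem_singleton] at hj0
    subst hj0
    omega
  rw [hb0, show (PsiHom R a) (0 : MM R) = 0 from map_zero _]
  simp

lemma ent_vert_zero : ent R (gen R rayGraph (.vert (0 : ℕ))) = 1 := by
  show (PsiHom R (lmk R rayGraph (fgen R rayGraph (.vert (0 : ℕ))))) (Finsupp.single 0 1) 0 = 1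
  have h1 : PsiHom R (lmk R rayGraph (fgen R rayGraph (.vert (0 : ℕ)))) = gE R (.vert (0 : ℕ)) :=
    Phi_fgen R _
  rw [h1]
  show (EE R 0 0 (Finsupp.single 0 1)) 0 = 1
  rw [EE_apply]
  simp

lemma ray_not_SG (R : Type) [Ring R] [Nontrivial R] : ¬ LPA.StronglyGraded R rayGraph := by
  intro h
  have h0 := h (-1) 1
  rw [neg_add_cancel] at h0
  have hv : gen R rayGraph (.vert (0 : ℕ)) ∈ LS R rayGraph 0 := by
    apply AddSubgroup.subset_closure
    exact ⟨FreeSemigroup.of (.vert (0 : ℕ)), 1, (wdeg_of _).trans rfl, rfl⟩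
  rw [← h0] at hv
  have hk := ent_vanish R hv
  rw [AddMonoidHom.mem_ker, ent_vert_zero] at hk
  exact one_ne_zero hk

end RayProof

/-- The infinite ray is row-finite and has no sinks, but fails Condition (Y); consequently,
for every (nontrivial) unital ring `R`, the Leavitt path algebra `L_R(H)` is not strongly
`ℤ`-graded. -/
theorem rayGraph_not_stronglyGraded :
    rayGraph.RowFinite ∧ rayGraph.NoSinks ∧ ¬ rayGraph.CondY ∧
      ∀ (R : Type) [Ring R] [Nontrivial R], ¬ LPA.StronglyGraded R rayGraph := by
  refine ⟨?_, ?_, RayProof.ray_not_condY, RayProof.ray_not_SG⟩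
  · intro v
    exact (Set.finite_singleton v).subset fun e he => he
  · intro v
    exact ⟨v, rfl⟩
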